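/- Let φ_ε : (0, a) → (a_m ε, a) be a C¹ increasing function with Dφ_ε(0) = Dφ_ε(a) = 1 and |Dφ_ε − 1| ≤ cε, and suppose |φ_ε(t) − t| ≤ c'ε for all t ∈ (0, a). Then for every u ∈ H¹((0,a)), ∫_{a_m ε}^{a} |u(t) − u(φ_ε^{-1}(t))|² dt ≤ Cε² ∫_0^a |u'(t)|² dt, with C depending only on c, c' and a. -/

import Mathlib

/-!
Write `δ = c'ε`. For `t ∈ (a_m ε, a)` the point `ψ t` lies within `δ` of `t`, because
`t = φ (ψ t)` and `φ` moves points by at most `δ`. The fundamental theorem of calculus and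
Cauchy–Schwarz on the segment between them give
`|u t - u (ψ t)|² ≤ δ ∫_{B(t, δ)} |u'|²`. Integrating in `t` and exchanging the order of
integration (Tonelli), every `s` is counted for `t` ranging over a set of length `2δ`, so the
left-hand side is at most `2 δ² ∫ |u'|² = 2 c'² ε² ∫ |u'|²`.
-/

open MeasureTheory Set Metric
open scoped ENNReal

theorem sq_setIntegral_le_measureReal_mul_setIntegral_sq {α : Type*} [MeasurableSpace α]
    {μ : Measure α} {s : Set α} {f : α → ℝ} (hs : μ s ≠ ∞) (hf : IntegrableOn f s μ)
    (hf2 : IntegrableOn (fun x => f x ^ 2) s μ) :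
    (∫ x in s, f x ∂μ) ^ 2 ≤ μ.real s * ∫ x in s, f x ^ 2 ∂μ := by
  rcases eq_or_ne (μ s) 0 with h0 | h0
  · simp [Measure.restrict_eq_zero.2 h0]
  have hpos : 0 < μ.real s := ENNReal.toReal_pos h0 hs
  have jensen := (even_two.convexOn_pow (𝕜 := ℝ)).map_set_average_le (continuousOn_pow 2)
    isClosed_univ h0 hs (by simp) hf hf2
  rw [setAverage_eq, setAverage_eq, smul_eq_mul, smul_eq_mul, mul_pow] at jensen
  calc (∫ x in s, f x ∂μ) ^ 2
      = μ.real s ^ 2 * ((μ.real s)⁻¹ ^ 2 * (∫ x in s, f x ∂μ) ^ 2) := by field_simp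
    _ ≤ μ.real s ^ 2 * ((μ.real s)⁻¹ * ∫ x in s, f x ^ 2 ∂μ) := by gcongr
    _ = μ.real s * ∫ x in s, f x ^ 2 ∂μ := by field_simp

theorem sq_sub_le_mul_setIntegral_sq_of_hasDerivAt {u u' : ℝ → ℝ} {x y : ℝ} (hxy : x ≤ y)
    (hu : ∀ s ∈ Icc x y, HasDerivAt u (u' s) s)
    (hu' : IntegrableOn (fun s => u' s ^ 2) (Icc x y)) :
    (u y - u x) ^ 2 ≤ (y - x) * ∫ s in Icc x y, u' s ^ 2 := by
  have hmeas : AEStronglyMeasurable u' (volume.restrict (Icc x y)) :=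
    (measurable_deriv u).aestronglyMeasurable.congr
      ((ae_restrict_iff' measurableSet_Icc).2 (.of_forall fun s hs => (hu s hs).deriv))
  have hint : IntegrableOn u' (Icc x y) :=
    ((memLp_two_iff_integrable_sq hmeas).2 hu').integrable one_le_two
  have ftc : u y - u x = ∫ s in Icc x y, u' s := by
    rw [integral_Icc_eq_integral_Ioc, ← intervalIntegral.integral_of_le hxy]
    refine (intervalIntegral.integral_eq_sub_of_hasDerivAt (fun s hs => hu s ?_) ?_).symm
    · rwa [uIcc_of_le hxy] at hs
    · exact (intervalIntegrable_iff_integrableOn_Icc_of_le hxy).2 hint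
  rw [ftc, ← Real.volume_real_Icc_of_le hxy]
  exact sq_setIntegral_le_measureReal_mul_setIntegral_sq measure_Icc_lt_top.ne hint hu'

theorem sq_sub_le_abs_mul_setIntegral_uIcc_sq_of_hasDerivAt {u u' : ℝ → ℝ} {x y : ℝ}
    (hu : ∀ s ∈ uIcc x y, HasDerivAt u (u' s) s)
    (hu' : IntegrableOn (fun s => u' s ^ 2) (uIcc x y)) :
    (u y - u x) ^ 2 ≤ |y - x| * ∫ s in uIcc x y, u' s ^ 2 := by
  wlog hxy : x ≤ y generalizing x y
  · rw [uIcc_comm] at hu hu' ⊢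
    rw [sub_sq_comm, abs_sub_comm]
    exact this hu hu' (le_of_not_ge hxy)
  rw [uIcc_of_le hxy] at hu hu' ⊢
  rw [abs_of_nonneg (sub_nonneg.2 hxy)]
  exact sq_sub_le_mul_setIntegral_sq_of_hasDerivAt hxy hu hu'

theorem ofReal_sq_sub_le_mul_setLIntegral_closedBall {u u' : ℝ → ℝ} {S : Set ℝ} {x y δ : ℝ}
    (hu : ∀ s ∈ S, HasDerivAt u (u' s) s)
    (hu' : IntegrableOn (fun s => u' s ^ 2) S) (hxyS : uIcc x y ⊆ S) (hxy : |y - x| ≤ δ) :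
    ENNReal.ofReal ((u y - u x) ^ 2) ≤
      ENNReal.ofReal δ *
        ∫⁻ s in closedBall y δ, S.indicator (fun s => ENNReal.ofReal (u' s ^ 2)) s := by
  have hball : uIcc x y ⊆ closedBall y δ :=
    (convex_closedBall y δ).ordConnected.uIcc_subset
      (by rwa [mem_closedBall, Real.dist_eq, abs_sub_comm])
      (mem_closedBall_self ((abs_nonneg _).trans hxy))
  calc ENNReal.ofReal ((u y - u x) ^ 2)
      ≤ ENNReal.ofReal (|y - x| * ∫ s in uIcc x y, u' s ^ 2) :=
        ENNReal.ofReal_le_ofReal (sq_sub_le_abs_mul_setIntegral_uIcc_sq_of_hasDerivAt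
          (fun s hs => hu s (hxyS hs)) (hu'.mono_set hxyS))
    _ = ENNReal.ofReal |y - x| *
          ∫⁻ s in uIcc x y, S.indicator (fun s => ENNReal.ofReal (u' s ^ 2)) s := by
        rw [ENNReal.ofReal_mul (abs_nonneg _), ofReal_integral_eq_lintegral_ofReal
          (hu'.mono_set hxyS) (.of_forall fun s => sq_nonneg _)]
        congr 1
        refine setLIntegral_congr_fun measurableSet_uIcc fun s hs => ?_
        rw [indicator_of_mem (hxyS hs)]
    _ ≤ _ := by gcongr

theorem lintegral_setLIntegral_closedBall {g : ℝ → ℝ≥0∞} (hg : AEMeasurable g) (δ : ℝ) :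
    ∫⁻ t, ∫⁻ s in closedBall t δ, g s = ENNReal.ofReal (2 * δ) * ∫⁻ s, g s := by
  set E : Set (ℝ × ℝ) := {p | dist p.2 p.1 ≤ δ}
  have hE : MeasurableSet E := measurableSet_le (by fun_prop) measurable_const
  have hmeas : AEMeasurable (E.indicator fun p => g p.2) (volume.prod volume) :=
    (hg.comp_quasiMeasurePreserving Measure.quasiMeasurePreserving_snd).indicator hE
  calc ∫⁻ t, ∫⁻ s in closedBall t δ, g s
      = ∫⁻ t, ∫⁻ s, E.indicator (fun p => g p.2) (t, s) := by
        refine lintegral_congr fun t => ?_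
        rw [← lintegral_indicator measurableSet_closedBall]
        rfl
    _ = ∫⁻ s, ∫⁻ t, E.indicator (fun p => g p.2) (t, s) := lintegral_lintegral_swap hmeas
    _ = ∫⁻ s, g s * ENNReal.ofReal (2 * δ) := by
        refine lintegral_congr fun s => ?_
        rw [← Real.volume_closedBall s δ, ← lintegral_indicator_const measurableSet_closedBall]
        refine lintegral_congr fun t => ?_
        simp only [E, indicator, mem_ofPred_eq, mem_closedBall, dist_comm]
    _ = ENNReal.ofReal (2 * δ) * ∫⁻ s, g s := by
        rw [lintegral_mul_const' _ _ ENNReal.ofReal_ne_top, mul_comm]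

theorem integral_le_of_lintegral_ofReal_le {α : Type*} [MeasurableSpace α] {μ : Measure α}
    {f : α → ℝ} {R : ℝ} (hf : 0 ≤ᵐ[μ] f) (hR : 0 ≤ R)
    (h : ∫⁻ x, ENNReal.ofReal (f x) ∂μ ≤ ENNReal.ofReal R) : ∫ x, f x ∂μ ≤ R := by
  by_cases hfi : Integrable f μ
  · rwa [← ENNReal.ofReal_le_ofReal_iff hR, ofReal_integral_eq_lintegral_ofReal hfi hf]
  · rw [integral_undef hfi]
    exact hR

theorem stmt19_general (a c c' am : ℝ) (hc' : 0 < c') (ham : 0 < am) :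
    ∃ C : ℝ, 0 < C ∧ ∀ ε : ℝ, 0 < ε → am * ε < a →
      ∀ φ dφ ψ : ℝ → ℝ,
        (∀ t ∈ Icc 0 a, HasDerivAt φ (dφ t) t) →
        StrictMonoOn φ (Icc 0 a) →
        MapsTo φ (Ioo 0 a) (Ioo (am * ε) a) →
        SurjOn φ (Ioo 0 a) (Ioo (am * ε) a) →
        dφ 0 = 1 → dφ a = 1 →
        (∀ t ∈ Icc 0 a, |dφ t - 1| ≤ c * ε) →
        (∀ t ∈ Icc 0 a, |φ t - t| ≤ c' * ε) →
        (∀ t ∈ Ioo (am * ε) a, ψ t ∈ Ioo 0 a ∧ φ (ψ t) = t) →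
        ∀ u u' : ℝ → ℝ,
          (∀ t ∈ Ioo 0 a, HasDerivAt u (u' t) t) →
          IntegrableOn (fun t => (u' t) ^ 2) (Ioo 0 a) →
          ∫ t in Ioo (am * ε) a, (u t - u (ψ t)) ^ 2
            ≤ C * ε ^ 2 * ∫ t in Ioo 0 a, (u' t) ^ 2 := by
  refine ⟨2 * c' ^ 2, by positivity, ?_⟩
  intro ε hε _ φ _ ψ _ _ _ _ _ _ _ hφ_near hψ u u' hu hu'
  set δ := c' * ε with hδ
  set g : ℝ → ℝ≥0∞ := (Ioo 0 a).indicator fun s => ENNReal.ofReal (u' s ^ 2)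
  have hg : AEMeasurable g :=
    (aemeasurable_indicator_iff measurableSet_Ioo).2 hu'.aemeasurable.ennreal_ofReal
  have hg_eq : ∫⁻ s, g s = ENNReal.ofReal (∫ s in Ioo 0 a, u' s ^ 2) := by
    rw [lintegral_indicator measurableSet_Ioo,
      ofReal_integral_eq_lintegral_ofReal hu' (.of_forall fun s => sq_nonneg _)]
  have pointwise : ∀ t ∈ Ioo (am * ε) a,
      ENNReal.ofReal ((u t - u (ψ t)) ^ 2) ≤
        ENNReal.ofReal δ * ∫⁻ s in closedBall t δ, g s := by
    intro t ht
    obtain ⟨hψt, hφψt⟩ := hψ t ht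
    have ht₀ : t ∈ Ioo 0 a := ⟨(mul_pos ham hε).trans ht.1, ht.2⟩
    refine ofReal_sq_sub_le_mul_setLIntegral_closedBall hu hu'
      (ordConnected_Ioo.uIcc_subset hψt ht₀) ?_
    simpa only [hφψt] using hφ_near (ψ t) (Ioo_subset_Icc_self hψt)
  refine integral_le_of_lintegral_ofReal_le (.of_forall fun t => sq_nonneg _)
    (by positivity) ?_
  calc ∫⁻ t in Ioo (am * ε) a, ENNReal.ofReal ((u t - u (ψ t)) ^ 2)
      ≤ ∫⁻ t in Ioo (am * ε) a, ENNReal.ofReal δ * ∫⁻ s in closedBall t δ, g s :=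
        setLIntegral_mono' measurableSet_Ioo pointwise
    _ ≤ ∫⁻ t, ENNReal.ofReal δ * ∫⁻ s in closedBall t δ, g s :=
        setLIntegral_le_lintegral _ _
    _ = ENNReal.ofReal (2 * c' ^ 2 * ε ^ 2 * ∫ s in Ioo 0 a, u' s ^ 2) := by
        rw [lintegral_const_mul' _ _ ENNReal.ofReal_ne_top, lintegral_setLIntegral_closedBall hg,
          hg_eq, ← mul_assoc, ← ENNReal.ofReal_mul (by positivity),
          ← ENNReal.ofReal_mul (by positivity), hδ]
        ring_nf

/-- One-dimensional shortening-map estimate: if `φ_ε : (0,a) → (a_m ε, a)` is a `C¹`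
increasing map with `Dφ_ε = 1` at the endpoints, `|Dφ_ε − 1| ≤ cε` and `|φ_ε(t) − t| ≤ c'ε`,
then for every `u ∈ H¹((0,a))`,
`∫_{a_m ε}^{a} |u(t) − u(φ_ε⁻¹(t))|² dt ≤ C ε² ∫_0^a |u'|²` with `C = C(c, c', a)`. -/
theorem stmt19 (a c c' am : ℝ) (ha : 0 < a) (hc : 0 < c) (hc' : 0 < c') (ham : 0 < am) :
    ∃ C : ℝ, 0 < C ∧ ∀ ε : ℝ, 0 < ε → am * ε < a →
      ∀ φ dφ ψ : ℝ → ℝ,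
        (∀ t ∈ Icc 0 a, HasDerivAt φ (dφ t) t) →
        StrictMonoOn φ (Icc 0 a) →
        MapsTo φ (Ioo 0 a) (Ioo (am * ε) a) →
        SurjOn φ (Ioo 0 a) (Ioo (am * ε) a) →
        dφ 0 = 1 → dφ a = 1 →
        (∀ t ∈ Icc 0 a, |dφ t - 1| ≤ c * ε) →
        (∀ t ∈ Icc 0 a, |φ t - t| ≤ c' * ε) →
        (∀ t ∈ Ioo (am * ε) a, ψ t ∈ Ioo 0 a ∧ φ (ψ t) = t) →
        ∀ u u' : ℝ → ℝ,
          (∀ t ∈ Ioo 0 a, HasDerivAt u (u' t) t) →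
          IntegrableOn (fun t => (u' t) ^ 2) (Ioo 0 a) →
          ∫ t in Ioo (am * ε) a, (u t - u (ψ t)) ^ 2
            ≤ C * ε ^ 2 * ∫ t in Ioo 0 a, (u' t) ^ 2 :=
  stmt19_general a c c' am hc' ham
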